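/- Let S ≥ 1, μ ∈ ℝ^S, V ≥ 1 and m ∈ (0,1]. There exist M ≥ 2 and, for every K ≥ 2, a cutoff ξ_M as above, such that for all u ∈ (ℝ≥0)^S with M < ∑ᵢ uᵢ and all v ∈ [m, V]^S, the adjusted relative entropy density e(u,v) := ∑ᵢ (uᵢ(log uᵢ + μᵢ - 1) - ξ_M(u)·uᵢ·(log vᵢ + μᵢ) + vᵢ) satisfies e(u,v) ≥ 1. -/
import Mathlib


theorem adjusted_entropy_density_lower_bound (S : ℕ) (hS : 1 ≤ S) (μ : Fin S → ℝ)
    (V m : ℝ) (hV : 1 ≤ V) (hm : 0 < m) (hm1 : m ≤ 1) :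
    ∃ M : ℝ, 2 ≤ M ∧ ∀ ξ : (Fin S → ℝ) → ℝ, (∀ u, ξ u ∈ Set.Icc (0:ℝ) 1) →
      ∀ u v : Fin S → ℝ, (∀ i, 0 ≤ u i) → (∀ i, v i ∈ Set.Icc m V) →
        M < ∑ i, u i →
        1 ≤ ∑ i, (u i * (Real.log (u i) + μ i - 1)
              - ξ u * u i * (Real.log (v i) + μ i) + v i) := by
  set B : ℝ := ∑ i, |μ i| with hB
  have hB0 : 0 ≤ B := Finset.sum_nonneg fun i _ => abs_nonneg _
  have hμB : ∀ i, |μ i| ≤ B := fun i =>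
    Finset.single_le_sum (fun j _ => abs_nonneg (μ j)) (Finset.mem_univ i)
  set c : ℝ := 2 + 2 * B + Real.log V with hc
  set E : ℝ := Real.exp (c - 1) with hE
  have hE0 : 0 < E := Real.exp_pos _
  have hlogV : 0 ≤ Real.log V := Real.log_nonneg hV
  refine ⟨max 2 (1 + S * E), le_max_left _ _, ?_⟩
  intro ξ hξ u v hu hv hsum
  have key : ∀ i ∈ Finset.univ, u i - E ≤ u i * (Real.log (u i) + μ i - 1)
      - ξ u * u i * (Real.log (v i) + μ i) + v i := by
    intro i _
    have hui := hu i
    have hvi := hv i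
    have hv0 : 0 < v i := lt_of_lt_of_le hm hvi.1
    have hlogv : Real.log (v i) ≤ Real.log V := Real.log_le_log hv0 hvi.2
    have hμi := abs_le.mp (hμB i)
    -- step 1: u log u ≥ c u - E
    have h1 : c * u i - E ≤ u i * Real.log (u i) := by
      rcases eq_or_lt_of_le hui with h | h
      · rw [← h]; simp; positivity
      · have ht := Real.add_one_le_exp (c - 1 - Real.log (u i))
        have heq : Real.exp (c - 1 - Real.log (u i)) = E / u i := by
          rw [Real.exp_sub, Real.exp_log h]
        rw [heq] at ht
        have h2 : (c - Real.log (u i)) * u i ≤ E := by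
          rw [← le_div_iff₀ h]; linarith
        nlinarith
    -- step 2: ξ term upper bound
    have hξi := hξ u
    have hA : 0 ≤ Real.log V + B := by linarith
    have ha : Real.log (v i) + μ i ≤ Real.log V + B := by linarith
    have h2 : ξ u * u i * (Real.log (v i) + μ i) ≤ u i * (Real.log V + B) := by
      calc ξ u * u i * (Real.log (v i) + μ i)
          ≤ ξ u * u i * (Real.log V + B) :=
            mul_le_mul_of_nonneg_left ha (mul_nonneg hξi.1 hui)
        _ ≤ u i * (Real.log V + B) := by nlinarith [mul_nonneg (mul_nonneg (sub_nonneg.mpr hξi.2) hui) hA]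
    -- step 3: μ lower bound
    have h3 : u i * (-B) ≤ u i * μ i := mul_le_mul_of_nonneg_left hμi.1 hui
    have hvm : m ≤ v i := hvi.1
    nlinarith
  have hsum2 : ∑ i, (u i - E) ≤ ∑ i, (u i * (Real.log (u i) + μ i - 1)
      - ξ u * u i * (Real.log (v i) + μ i) + v i) := Finset.sum_le_sum key
  have hsum3 : ∑ i : Fin S, (u i - E) = (∑ i, u i) - S * E := by
    rw [Finset.sum_sub_distrib, Finset.sum_const, Finset.card_univ, Fintype.card_fin,
      nsmul_eq_mul]
  have hM : (1 : ℝ) + S * E ≤ max 2 (1 + S * E) := le_max_right _ _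
  linarith [hsum2, hsum3 ▸ hsum2]
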